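/- arXiv:2402.06924 — 10 statements merged into one kernel-verified Lean document; each statement's English description precedes it below -/
import Mathlib

section
/- Let A = (V, μ) be a finite-dimensional anti-commutative algebra over a field K of characteristic zero. The linear map φ defined by φ(A,B,C) = ((A, ½(B+C)), ½(B−C)) is a linear isomorphism from Der₀(A) = {(A,B,C) ∈ End(V)³ : Aμ(X,Y) = μ(BX,Y) + μ(X,CY) for all X,Y} onto NDer(A) × QC(A), with inverse ((P,Q), R) ↦ (P, Q+R, Q−R). -/
/-!
If `μ` is anticommutative and `(A, B, C) ∈ Der₀`, then so is `(A, C, B)`. Averaging these two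
identities shows that `(A, (B + C)/2)` lies in `NDer`, and subtracting them
shows that `(B - C)/2` lies in the quasi-centroid. Conversely `(P, Q + R, Q - R)` lies in `Der₀`
whenever `(P, Q) ∈ NDer` and `R ∈ QC`, and the two maps are mutually inverse because `2` is
invertible in `K`.
-/

namespace AntiCommAlgebra

section CommRing

variable {R V : Type*} [CommRing R] [AddCommGroup V] [Module R V] (μ : V →ₗ[R] V →ₗ[R] V)

def der₀ : Set (Module.End R V × Module.End R V × Module.End R V) :=
  {t | ∀ X Y : V, t.1 (μ X Y) = μ (t.2.1 X) Y + μ X (t.2.2 Y)}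

def nDer : Set (Module.End R V × Module.End R V) :=
  {p | ∀ X Y : V, p.1 (μ X Y) = μ (p.2 X) Y + μ X (p.2 Y)}

def quasiCentroid : Set (Module.End R V) :=
  {S | ∀ X Y : V, μ (S X) Y = μ X (S Y)}

variable {μ}

theorem swap_mem_der₀ (hμ : ∀ X Y : V, μ X Y = -μ Y X) {A B C : Module.End R V}
    (h : (A, B, C) ∈ der₀ μ) : (A, C, B) ∈ der₀ μ := by
  intro X Y
  have := h Y X
  simp only [hμ Y X, hμ (B Y) X, hμ Y (C X), map_neg] at this
  rw [neg_injective (this.trans (neg_add _ _).symm), add_comm]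

def joinDer (p : (Module.End R V × Module.End R V) × Module.End R V) :
    Module.End R V × Module.End R V × Module.End R V :=
  (p.1.1, p.1.2 + p.2, p.1.2 - p.2)

theorem joinDer_mapsTo : Set.MapsTo joinDer (nDer μ ×ˢ quasiCentroid μ) (der₀ μ) := by
  rintro ⟨⟨P, Q⟩, S⟩ ⟨hP, hS⟩ X Y
  simp only [joinDer, LinearMap.add_apply, LinearMap.sub_apply, map_add, map_sub]
  rw [hP X Y, hS X Y]
  abel

end CommRing

section Field

variable {K V : Type*} [Field K] [CharZero K] [AddCommGroup V] [Module K V]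
  {μ : V →ₗ[K] V →ₗ[K] V}

def splitDer (t : Module.End K V × Module.End K V × Module.End K V) :
    (Module.End K V × Module.End K V) × Module.End K V :=
  ((t.1, (2:K)⁻¹ • (t.2.1 + t.2.2)), (2:K)⁻¹ • (t.2.1 - t.2.2))

theorem joinDer_splitDer (t : Module.End K V × Module.End K V × Module.End K V) :
    joinDer (splitDer t) = t := by
  obtain ⟨A, B, C⟩ := t
  simp only [joinDer, splitDer, Prod.mk.injEq, true_and]
  constructor <;> module

theorem splitDer_joinDer (p : (Module.End K V × Module.End K V) × Module.End K V) :
    splitDer (joinDer p) = p := by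
  obtain ⟨⟨P, Q⟩, S⟩ := p
  simp only [joinDer, splitDer, Prod.mk.injEq, true_and]
  constructor <;> module

theorem splitDer_mapsTo (hμ : ∀ X Y : V, μ X Y = -μ Y X) :
    Set.MapsTo splitDer (der₀ μ) (nDer μ ×ˢ quasiCentroid μ) := by
  rintro ⟨A, B, C⟩ h
  have h' := swap_mem_der₀ hμ h
  refine ⟨fun X Y => ?_, fun X Y => ?_⟩
  · simp only [splitDer, LinearMap.smul_apply, LinearMap.add_apply, map_add, map_smul]
    linear_combination (norm := module) (2:K)⁻¹ • h X Y + (2:K)⁻¹ • h' X Y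
  · simp only [splitDer, LinearMap.smul_apply, LinearMap.sub_apply, map_sub, map_smul]
    linear_combination (norm := module) (2:K)⁻¹ • h' X Y - (2:K)⁻¹ • h X Y

end Field

end AntiCommAlgebra

theorem stmt1_general {K V : Type*} [Field K] [CharZero K] [AddCommGroup V] [Module K V]
    (μ : V →ₗ[K] V →ₗ[K] V)
    (hanti : ∀ X Y : V, μ X Y = - μ Y X) :
    Set.BijOn
      (fun t : Module.End K V × Module.End K V × Module.End K V =>
        ((t.1, (2:K)⁻¹ • (t.2.1 + t.2.2)), (2:K)⁻¹ • (t.2.1 - t.2.2)))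
      {t : Module.End K V × Module.End K V × Module.End K V |
        ∀ X Y : V, t.1 (μ X Y) = μ (t.2.1 X) Y + μ X (t.2.2 Y)}
      (({p : Module.End K V × Module.End K V |
          ∀ X Y : V, p.1 (μ X Y) = μ (p.2 X) Y + μ X (p.2 Y)} ×ˢ
        {R : Module.End K V | ∀ X Y : V, μ (R X) Y = μ X (R Y)})) ∧
    Set.InvOn
      (fun p : (Module.End K V × Module.End K V) × Module.End K V =>
        (p.1.1, p.1.2 + p.2, p.1.2 - p.2))
      (fun t : Module.End K V × Module.End K V × Module.End K V =>
        ((t.1, (2:K)⁻¹ • (t.2.1 + t.2.2)), (2:K)⁻¹ • (t.2.1 - t.2.2)))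
      {t : Module.End K V × Module.End K V × Module.End K V |
        ∀ X Y : V, t.1 (μ X Y) = μ (t.2.1 X) Y + μ X (t.2.2 Y)}
      (({p : Module.End K V × Module.End K V |
          ∀ X Y : V, p.1 (μ X Y) = μ (p.2 X) Y + μ X (p.2 Y)} ×ˢ
        {R : Module.End K V | ∀ X Y : V, μ (R X) Y = μ X (R Y)})) := by
  open AntiCommAlgebra in
  have hinv : Set.InvOn joinDer splitDer (der₀ μ) (nDer μ ×ˢ quasiCentroid μ) :=
    ⟨fun t _ => joinDer_splitDer t, fun p _ => splitDer_joinDer p⟩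
  exact ⟨hinv.bijOn (AntiCommAlgebra.splitDer_mapsTo hanti) AntiCommAlgebra.joinDer_mapsTo, hinv⟩

theorem stmt1 {K V : Type*} [Field K] [CharZero K] [AddCommGroup V] [Module K V]
    [FiniteDimensional K V] (μ : V →ₗ[K] V →ₗ[K] V)
    (hanti : ∀ X Y : V, μ X Y = - μ Y X) :
    Set.BijOn
      (fun t : Module.End K V × Module.End K V × Module.End K V =>
        ((t.1, (2:K)⁻¹ • (t.2.1 + t.2.2)), (2:K)⁻¹ • (t.2.1 - t.2.2)))
      {t : Module.End K V × Module.End K V × Module.End K V |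
        ∀ X Y : V, t.1 (μ X Y) = μ (t.2.1 X) Y + μ X (t.2.2 Y)}
      (({p : Module.End K V × Module.End K V |
          ∀ X Y : V, p.1 (μ X Y) = μ (p.2 X) Y + μ X (p.2 Y)} ×ˢ
        {R : Module.End K V | ∀ X Y : V, μ (R X) Y = μ X (R Y)})) ∧
    Set.InvOn
      (fun p : (Module.End K V × Module.End K V) × Module.End K V =>
        (p.1.1, p.1.2 + p.2, p.1.2 - p.2))
      (fun t : Module.End K V × Module.End K V × Module.End K V =>
        ((t.1, (2:K)⁻¹ • (t.2.1 + t.2.2)), (2:K)⁻¹ • (t.2.1 - t.2.2)))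
      {t : Module.End K V × Module.End K V × Module.End K V |
        ∀ X Y : V, t.1 (μ X Y) = μ (t.2.1 X) Y + μ X (t.2.2 Y)}
      (({p : Module.End K V × Module.End K V |
          ∀ X Y : V, p.1 (μ X Y) = μ (p.2 X) Y + μ X (p.2 Y)} ×ˢ
        {R : Module.End K V | ∀ X Y : V, μ (R X) Y = μ X (R Y)})) :=
  stmt1_general μ hanti
end

section
/- Let A = (V, μ) be an anti-commutative algebra over a field of characteristic zero such that QC(A) = C(A), and let t ∈ K with t ≠ −1/2. Then the map ψ(A,B,C) = ((1/(2t+1))((t+1)B + tC), (1/(2t+1))(C − B)) is a linear isomorphism from T(t)(A) = {(A,B,C) : Aμ(X,Y) = μ(BX,Y) + μ(X,CY) for all X,Y, and A + tB + (t−1)C = 0} onto D(1−2t,1,1)(A) × C(A). -/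
theorem stmt4 {K V : Type*} [Field K] [CharZero K] [AddCommGroup V] [Module K V]
    (μ : V →ₗ[K] V →ₗ[K] V)
    (hanti : ∀ X Y : V, μ X Y = - μ Y X)
    (hQC : {R : Module.End K V | ∀ X Y : V, μ (R X) Y = μ X (R Y)} =
      {M : Module.End K V | ∀ X Y : V, M (μ X Y) = μ (M X) Y})
    (t : K) (ht : t ≠ -(2:K)⁻¹) :
    Set.BijOn
      (fun a : Module.End K V × Module.End K V × Module.End K V =>
        ((2*t+1)⁻¹ • ((t+1) • a.2.1 + t • a.2.2), (2*t+1)⁻¹ • (a.2.2 - a.2.1)))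
      {a : Module.End K V × Module.End K V × Module.End K V |
        (∀ X Y : V, a.1 (μ X Y) = μ (a.2.1 X) Y + μ X (a.2.2 Y)) ∧
        a.1 + t • a.2.1 + (t-1) • a.2.2 = 0}
      ({D : Module.End K V | ∀ X Y : V, (1-2*t) • D (μ X Y) = μ (D X) Y + μ X (D Y)} ×ˢ
        {M : Module.End K V | ∀ X Y : V, M (μ X Y) = μ (M X) Y}) := by
  have h2t : (2*t+1 : K) ≠ 0 := fun h => ht (by linear_combination h/2)
  refine ⟨?_, ?_, ?_⟩
  · -- MapsTo
    rintro ⟨A, B, C⟩ ⟨h1, h2⟩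
    dsimp only at h1 h2
    have hq : ∀ X Y : V, μ ((C - B) X) Y = μ X ((C - B) Y) := by
      intro X Y
      have e1 := h1 X Y
      have e2 := h1 Y X
      rw [hanti Y X, hanti (B Y) X, hanti Y (C X)] at e2
      simp only [map_neg, LinearMap.sub_apply, map_sub] at e2 ⊢
      linear_combination (norm := module) e1 + e2
    have hqc : ∀ X Y : V, (C - B) (μ X Y) = μ ((C - B) X) Y :=
      (Set.ext_iff.mp hQC (C - B)).mp hq
    simp only [Set.mem_prod, Set.mem_setOf_eq]
    constructor
    · -- D-condition
      intro X Y
      have e1 := h1 X Y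
      have eA : A (μ X Y) + t • B (μ X Y) + (t-1) • C (μ X Y) = 0 := by
        simpa using DFunLike.congr_fun h2 (μ X Y)
      have eqc := hqc X Y
      have eq' := hq X Y
      simp only [LinearMap.add_apply, LinearMap.smul_apply, LinearMap.sub_apply,
        map_add, map_smul, map_sub] at eqc eq' ⊢
      linear_combination (norm := module) (2*t+1)⁻¹ • ((2*t+1) • e1 - (2*t+1) • eA
        - eqc - (t+1) • eq')
    · -- C-condition
      intro X Y
      have eqc := hqc X Y
      simp only [LinearMap.smul_apply, LinearMap.sub_apply, map_smul, map_sub] at eqc ⊢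
      linear_combination (norm := module) (2*t+1)⁻¹ • eqc
  · -- InjOn
    rintro ⟨A, B, C⟩ ⟨h1, h2⟩ ⟨A', B', C'⟩ ⟨h1', h2'⟩ heq
    dsimp only at h1 h2 h1' h2' heq
    simp only [Prod.mk.injEq] at heq
    obtain ⟨eD, eM⟩ := heq
    have eD' : (t+1) • B + t • C = (t+1) • B' + t • C' :=
      smul_right_injective _ (inv_ne_zero h2t) eD
    have eM' : C - B = C' - B' := smul_right_injective _ (inv_ne_zero h2t) eM
    have hB : B = B' := by
      have h3 : (2*t+1) • B = (2*t+1) • B' := by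
        linear_combination (norm := module) eD' - t • eM'
      exact smul_right_injective _ h2t h3
    have hC : C = C' := by
      linear_combination (norm := module) eM' + hB
    have hA : A = A' := by
      linear_combination (norm := module) h2 - h2' - t • hB - (t-1) • hC
    subst hA; subst hB; subst hC; rfl
  · -- SurjOn
    rintro ⟨D, M⟩ ⟨hD, hM⟩
    dsimp only at hD hM
    have hMq : ∀ X Y : V, μ (M X) Y = μ X (M Y) := by
      have : M ∈ {R : Module.End K V | ∀ X Y : V, μ (R X) Y = μ X (R Y)} := by
        rw [hQC]; exact hM
      exact this
    refine ⟨((1-2*t) • D + M, D - t • M, D + (t+1) • M), ⟨?_, ?_⟩, ?_⟩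
    · intro X Y
      have e := hD X Y
      have eM := hM X Y
      have eq := hMq X Y
      simp only [LinearMap.add_apply, LinearMap.sub_apply, LinearMap.smul_apply,
        map_add, map_sub, map_smul]
      linear_combination (norm := module) e + eM + (t+1) • eq
    · dsimp only; module
    · dsimp only
      refine Prod.ext ?_ ?_
      · match_scalars <;> field_simp <;> ring
      · match_scalars <;> field_simp <;> ring
end

section
/- Let A = (V, μ) be an anti-commutative algebra over a field of characteristic zero with QC(A) = C(A) and t ≠ −1/2. If (A,B,C) satisfies Aμ(X,Y) = μ(BX,Y) + μ(X,CY) for all X,Y and A + tB + (t−1)C = 0, then the linear map D = (1/(2t+1))((t+1)B + tC) is a (1−2t,1,1)-derivation: (1−2t)Dμ(X,Y) = μ(DX,Y) + μ(X,DY) for all X, Y ∈ V. -/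
theorem stmt5 {K V : Type*} [Field K] [CharZero K] [AddCommGroup V] [Module K V]
    (μ : V →ₗ[K] V →ₗ[K] V)
    (hanti : ∀ X Y : V, μ X Y = - μ Y X)
    (hQC : {R : Module.End K V | ∀ X Y : V, μ (R X) Y = μ X (R Y)} =
      {M : Module.End K V | ∀ X Y : V, M (μ X Y) = μ (M X) Y})
    (t : K) (ht : 2 * t + 1 ≠ 0)
    (A B C : Module.End K V)
    (h : ∀ X Y : V, A (μ X Y) = μ (B X) Y + μ X (C Y))
    (hrel : A + t • B + (t - 1) • C = 0) :
    ∀ X Y : V,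
      (1 - 2*t) • ((2*t+1)⁻¹ • ((t+1) • B + t • C)) (μ X Y) =
        μ (((2*t+1)⁻¹ • ((t+1) • B + t • C)) X) Y +
          μ X (((2*t+1)⁻¹ • ((t+1) • B + t • C)) Y) := by
  -- Second form of the defining identity, via anti-commutativity
  have e2 : ∀ X Y : V, A (μ X Y) = μ (C X) Y + μ X (B Y) := by
    intro X Y
    have h2 := h Y X
    rw [hanti Y X, map_neg, hanti (B Y) X, hanti Y (C X)] at h2
    -- h2 : -(A (μ X Y)) = -(μ X (B Y)) + -(μ (C X) Y)
    linear_combination (norm := module) -h2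
  -- B - C is in QC(A), hence (by hQC) in C(A)
  have hmem : (B - C) ∈ {R : Module.End K V | ∀ X Y : V, μ (R X) Y = μ X (R Y)} := by
    intro X Y
    simp only [LinearMap.sub_apply, map_sub, LinearMap.sub_apply]
    linear_combination (norm := module) e2 X Y - h X Y
  have hCmem := hQC ▸ hmem
  have e3 : ∀ X Y : V, B (μ X Y) - C (μ X Y) = μ (B X) Y - μ (C X) Y := by
    intro X Y
    have := hCmem X Y
    simpa [map_sub, LinearMap.sub_apply] using this
  intro X Y
  have e5 : A (μ X Y) + t • B (μ X Y) + (t - 1) • C (μ X Y) = 0 := by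
    have := LinearMap.congr_fun hrel (μ X Y)
    simpa using this
  -- unfold the applications of the combined endomorphism
  simp only [LinearMap.smul_apply, LinearMap.add_apply, map_add, map_smul]
  have main : (1-2*t) • ((t+1) • B (μ X Y) + t • C (μ X Y)) =
      ((t+1) • μ (B X) Y + t • μ (C X) Y) + ((t+1) • μ X (B Y) + t • μ X (C Y)) := by
    linear_combination (norm := module) t • (h X Y) + (t+1) • (e2 X Y) + e3 X Y
      - (2*t+1) • e5
  linear_combination (norm := module) (2*t+1)⁻¹ • main
end

section
/- Let A = (V, μ) be a perfect anti-commutative algebra over a field of characteristic zero such that QDer(A) = Der(A) ⊕ C(A) (internal direct sum inside End(V)). Then for all t ∈ K with t ≠ 1 and t ≠ 2, D(t,1,1)(A) = {0}, and moreover D(2,1,1)(A) = C(A). -/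
private lemma aux_zero {K V : Type*} [Field K] [AddCommGroup V] [Module K V]
    (μ : V →ₗ[K] V →ₗ[K] V)
    (hperf : Submodule.span K {z : V | ∃ X Y : V, μ X Y = z} = ⊤)
    (N : Module.End K V) (h : ∀ X Y : V, N (μ X Y) = 0) : N = 0 := by
  have hle : Submodule.span K {z : V | ∃ X Y : V, μ X Y = z} ≤ LinearMap.ker N := by
    rw [Submodule.span_le]
    rintro z ⟨X, Y, rfl⟩
    exact h X Y
  rw [hperf, top_le_iff] at hle
  exact LinearMap.ker_eq_top.mp hle

private lemma aux_swap {K V : Type*} [Field K] [AddCommGroup V] [Module K V]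
    (μ : V →ₗ[K] V →ₗ[K] V) (hanti : ∀ X Y : V, μ X Y = - μ Y X)
    (M : Module.End K V) (hM : ∀ X Y : V, M (μ X Y) = μ (M X) Y) :
    ∀ X Y : V, μ X (M Y) = M (μ X Y) := by
  intro X Y
  have h1 : μ X (M Y) = - μ (M Y) X := hanti X (M Y)
  rw [h1, ← hM Y X, hanti Y X, map_neg, neg_neg]

theorem stmt6 {K V : Type*} [Field K] [CharZero K] [AddCommGroup V] [Module K V]
    (μ : V →ₗ[K] V →ₗ[K] V)
    (hanti : ∀ X Y : V, μ X Y = - μ Y X)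
    (hperf : Submodule.span K {z : V | ∃ X Y : V, μ X Y = z} = ⊤)
    (hQDer : {Q : Module.End K V |
        ∃ P : Module.End K V, ∀ X Y : V, P (μ X Y) = μ (Q X) Y + μ X (Q Y)} =
      {Q : Module.End K V |
        ∃ D ∈ {D : Module.End K V | ∀ X Y : V, D (μ X Y) = μ (D X) Y + μ X (D Y)},
        ∃ M ∈ {M : Module.End K V | ∀ X Y : V, M (μ X Y) = μ (M X) Y}, Q = D + M})
    (hint : ∀ D : Module.End K V,
      (∀ X Y : V, D (μ X Y) = μ (D X) Y + μ X (D Y)) →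
      (∀ X Y : V, D (μ X Y) = μ (D X) Y) → D = 0) :
    (∀ t : K, t ≠ 1 → t ≠ 2 →
      {D : Module.End K V | ∀ X Y : V, t • D (μ X Y) = μ (D X) Y + μ X (D Y)} = {0}) ∧
    {D : Module.End K V | ∀ X Y : V, (2:K) • D (μ X Y) = μ (D X) Y + μ X (D Y)} =
      {M : Module.End K V | ∀ X Y : V, M (μ X Y) = μ (M X) Y} := by
  -- key decomposition lemma for D ∈ D(t,1,1)
  have key : ∀ (t : K) (D : Module.End K V),
      (∀ X Y : V, t • D (μ X Y) = μ (D X) Y + μ X (D Y)) →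
      ∃ D' M : Module.End K V,
        (∀ X Y : V, D' (μ X Y) = μ (D' X) Y + μ X (D' Y)) ∧
        (∀ X Y : V, M (μ X Y) = μ (M X) Y) ∧
        D = D' + M ∧ (t - 1) • D' + (t - 2) • M = 0 := by
    intro t D hD
    have hmem : D ∈ {Q : Module.End K V |
        ∃ P : Module.End K V, ∀ X Y : V, P (μ X Y) = μ (Q X) Y + μ X (Q Y)} := by
      refine ⟨t • D, fun X Y => ?_⟩
      simpa using hD X Y
    rw [hQDer] at hmem
    obtain ⟨D', hD', M, hM, rfl⟩ := hmem
    refine ⟨D', M, hD', hM, rfl, ?_⟩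
    apply aux_zero μ hperf
    intro X Y
    have hswap := aux_swap μ hanti M hM X Y
    have e1 : t • (D' + M) ((μ X Y)) = μ ((D' + M) X) Y + μ X ((D' + M) Y) := hD X Y
    simp only [LinearMap.add_apply, map_add, LinearMap.map_add] at e1
    have e2 : μ (D' X) Y + μ (M X) Y + (μ X (D' Y) + μ X (M Y))
        = D' (μ X Y) + (M (μ X Y) + M (μ X Y)) := by
      rw [hswap, hD' X Y, hM X Y]; abel
    rw [e2] at e1
    simp only [LinearMap.add_apply, LinearMap.smul_apply]
    linear_combination (norm := module) e1
  constructor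
  · intro t ht1 ht2
    ext D
    simp only [Set.mem_setOf_eq, Set.mem_singleton_iff]
    constructor
    · intro hD
      obtain ⟨D', M, hD', hM, hsum, hrel⟩ := key t D hD
      -- D' = ((2-t)/(t-1)) • M is a derivation and in C(A), hence 0
      have ht1' : t - 1 ≠ 0 := sub_ne_zero.mpr ht1
      have ht2' : t - 2 ≠ 0 := sub_ne_zero.mpr ht2
      have hD'eq : D' = ((2 - t) / (t - 1)) • M := by
        have : (t - 1) • D' = (2 - t) • M := by
          have := hrel
          rw [add_eq_zero_iff_eq_neg] at this
          rw [this]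
          rw [← neg_smul]; ring_nf
        calc D' = ((t - 1)⁻¹ * (t - 1)) • D' := by
              rw [inv_mul_cancel₀ ht1', one_smul]
          _ = (t - 1)⁻¹ • ((t - 1) • D') := by rw [mul_smul]
          _ = (t - 1)⁻¹ • ((2 - t) • M) := by rw [this]
          _ = ((2 - t) / (t - 1)) • M := by
              rw [smul_smul, div_eq_mul_inv, mul_comm]
      have hD'C : ∀ X Y : V, D' (μ X Y) = μ (D' X) Y := by
        intro X Y
        rw [hD'eq]
        simp only [LinearMap.smul_apply]
        rw [hM X Y, ← LinearMap.map_smul]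
        simp
      have hD'0 : D' = 0 := hint D' hD' hD'C
      have hM0 : M = 0 := by
        rw [hD'0] at hrel
        simp only [smul_zero, zero_add] at hrel
        exact (smul_eq_zero.mp hrel).resolve_left ht2'
      rw [hsum, hD'0, hM0, add_zero]
    · rintro rfl
      intro X Y
      simp
  · ext D
    simp only [Set.mem_setOf_eq]
    constructor
    · intro hD
      obtain ⟨D', M, hD', hM, hsum, hrel⟩ := key 2 D hD
      have hD'0 : D' = 0 := by
        have h := hrel
        rw [show (2:K)-1 = 1 by norm_num, show (2:K)-2 = 0 by norm_num,
          one_smul, zero_smul, add_zero] at h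
        exact h
      rw [hsum, hD'0, zero_add]
      exact hM
    · intro hD X Y
      rw [aux_swap μ hanti D hD X Y, ← hD X Y, two_smul]
end

section
/- Let A = (V, μ) be a perfect anti-commutative algebra over a field of characteristic zero with QDer(A) = Der(A) ⊕ C(A). If u ∈ K with u ≠ 1/2 and u ≠ 1, then D(u,1,0)(A) = {0}, i.e. the only linear map M with uMμ(X,Y) = μ(MX,Y) for all X,Y is M = 0. -/
theorem stmt7 {K V : Type*} [Field K] [CharZero K] [AddCommGroup V] [Module K V]
    (μ : V →ₗ[K] V →ₗ[K] V)
    (hanti : ∀ X Y : V, μ X Y = - μ Y X)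
    (hperf : Submodule.span K {z : V | ∃ X Y : V, μ X Y = z} = ⊤)
    (hQDer : {Q : Module.End K V |
        ∃ P : Module.End K V, ∀ X Y : V, P (μ X Y) = μ (Q X) Y + μ X (Q Y)} =
      {Q : Module.End K V |
        ∃ D ∈ {D : Module.End K V | ∀ X Y : V, D (μ X Y) = μ (D X) Y + μ X (D Y)},
        ∃ M ∈ {M : Module.End K V | ∀ X Y : V, M (μ X Y) = μ (M X) Y}, Q = D + M})
    (hint : ∀ D : Module.End K V,
      (∀ X Y : V, D (μ X Y) = μ (D X) Y + μ X (D Y)) →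
      (∀ X Y : V, D (μ X Y) = μ (D X) Y) → D = 0)
    (u : K) (hu1 : u ≠ (2:K)⁻¹) (hu2 : u ≠ 1) :
    ∀ M : Module.End K V, (∀ X Y : V, u • M (μ X Y) = μ (M X) Y) → M = 0 := by
  intro M hM
  -- symmetric form
  have hM2 : ∀ X Y : V, u • M (μ X Y) = μ X (M Y) := by
    intro X Y
    have h := hM Y X
    rw [hanti Y X, hanti (M Y) X] at h
    simpa using h
  -- M is a quasiderivation with P = (2u) • M
  have hQ : M ∈ {Q : Module.End K V |
      ∃ P : Module.End K V, ∀ X Y : V, P (μ X Y) = μ (Q X) Y + μ X (Q Y)} := by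
    refine ⟨(2 * u) • M, fun X Y => ?_⟩
    have : ((2 * u) • M) (μ X Y) = u • M (μ X Y) + u • M (μ X Y) := by
      simp [LinearMap.smul_apply, two_mul, add_smul, mul_smul]
    rw [this]
    nth_rewrite 1 [hM X Y]
    rw [hM2 X Y]
  rw [hQDer] at hQ
  obtain ⟨D, hD, C, hC, hMeq⟩ := hQ
  -- symmetric form for C
  have hC2 : ∀ X Y : V, C (μ X Y) = μ X (C Y) := by
    intro X Y
    have h := hC Y X
    rw [hanti Y X, hanti (C Y) X] at h
    simpa using h
  -- two expansions of u • M (μ X Y)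
  have eq1 : ∀ X Y : V, u • D (μ X Y) + u • C (μ X Y)
      = D (μ X Y) - μ X (D Y) + C (μ X Y) := by
    intro X Y
    have h := hM X Y
    rw [hMeq] at h
    simp only [LinearMap.add_apply, map_add, smul_add] at h
    rw [← hC X Y] at h
    have hdx : μ (D X) Y = D (μ X Y) - μ X (D Y) := by
      rw [hD X Y]; abel
    rw [hdx] at h
    linear_combination (norm := abel) h
  have eq2 : ∀ X Y : V, u • D (μ X Y) + u • C (μ X Y)
      = μ X (D Y) + C (μ X Y) := by
    intro X Y
    have h := hM2 X Y
    rw [hMeq] at h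
    simp only [LinearMap.add_apply, map_add, smul_add] at h
    rw [← hC2 X Y] at h
    linear_combination (norm := abel) h
  -- key1 : μ X (D Y) = 2⁻¹ • D (μ X Y)
  have key1 : ∀ X Y : V, μ X (D Y) = (2:K)⁻¹ • D (μ X Y) := by
    intro X Y
    have h := (eq1 X Y).symm.trans (eq2 X Y)
    -- D (μ X Y) - μ X (D Y) = μ X (D Y), i.e. (2:K) • μ X (D Y) = D (μ X Y)
    have h2 : (2:K) • μ X (D Y) = D (μ X Y) := by
      have : D (μ X Y) = μ X (D Y) + μ X (D Y) := by
        have := h; abel_nf at this ⊢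
        linear_combination (norm := abel) this
      rw [this, two_smul]
    rw [← h2, smul_smul]
    norm_num
  -- β and the relation C (μ X Y) = β • D (μ X Y)
  set β : K := ((2:K)⁻¹ - u) / (u - 1) with hβdef
  have hu1' : u - 1 ≠ 0 := sub_ne_zero.mpr hu2
  have hβ : β ≠ 0 := by
    apply div_ne_zero _ hu1'
    exact sub_ne_zero.mpr (Ne.symm hu1)
  have key2 : ∀ X Y : V, C (μ X Y) = β • D (μ X Y) := by
    intro X Y
    have h := eq2 X Y
    rw [key1 X Y] at h
    -- u • Dm + u • Cm = 2⁻¹ • Dm + Cm → (u - 1) • Cm = (2⁻¹ - u) • Dm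
    have h3 : (u - 1) • C (μ X Y) = ((2:K)⁻¹ - u) • D (μ X Y) := by
      rw [sub_smul, sub_smul, one_smul]
      linear_combination (norm := abel) h
    have := congrArg (fun v => (u - 1)⁻¹ • v) h3
    simp only [smul_smul, inv_mul_cancel₀ hu1', one_smul] at this
    rw [this, hβdef, div_eq_inv_mul]
  -- C = β • D
  have hCD : C = β • D := by
    apply LinearMap.ext
    intro v
    have hv : v ∈ Submodule.span K {z : V | ∃ X Y : V, μ X Y = z} := by
      rw [hperf]; trivial
    induction hv using Submodule.span_induction with
    | mem z hz =>
      obtain ⟨X, Y, rfl⟩ := hz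
      simpa using key2 X Y
    | zero => simp
    | add x y _ _ hx hy => simp [map_add, hx, hy]
    | smul a x _ hx => simp [map_smul, hx]
  -- D is both a derivation and in the centroid
  have hDcent : ∀ X Y : V, D (μ X Y) = μ (D X) Y := by
    intro X Y
    have h := hC X Y
    rw [hCD] at h
    simp only [LinearMap.smul_apply, map_smul] at h
    exact smul_right_injective V hβ h
  have hD0 : D = 0 := hint D hD hDcent
  rw [hMeq, hCD, hD0]
  simp
end

section
/- Let A = (V, μ) be a perfect anti-commutative algebra over a field of characteristic zero such that QC(A) = C(A) and QDer(A) = Der(A) ⊕ C(A). Then T(−1/2)(A) = {(A,B,C) : Aμ(X,Y) = μ(BX,Y) + μ(X,CY), A − (1/2)B − (3/2)C = 0} is linearly isomorphic to C(A), via M ↦ (M, ½M, ½M). -/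
theorem stmt8 {K V : Type*} [Field K] [CharZero K] [AddCommGroup V] [Module K V]
    (μ : V →ₗ[K] V →ₗ[K] V)
    (hanti : ∀ X Y : V, μ X Y = - μ Y X)
    (hperf : Submodule.span K {z : V | ∃ X Y : V, μ X Y = z} = ⊤)
    (hQC : {R : Module.End K V | ∀ X Y : V, μ (R X) Y = μ X (R Y)} =
      {M : Module.End K V | ∀ X Y : V, M (μ X Y) = μ (M X) Y})
    (hQDer : {Q : Module.End K V |
        ∃ P : Module.End K V, ∀ X Y : V, P (μ X Y) = μ (Q X) Y + μ X (Q Y)} =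
      {Q : Module.End K V |
        ∃ D ∈ {D : Module.End K V | ∀ X Y : V, D (μ X Y) = μ (D X) Y + μ X (D Y)},
        ∃ M ∈ {M : Module.End K V | ∀ X Y : V, M (μ X Y) = μ (M X) Y}, Q = D + M})
    (hint : ∀ D : Module.End K V,
      (∀ X Y : V, D (μ X Y) = μ (D X) Y + μ X (D Y)) →
      (∀ X Y : V, D (μ X Y) = μ (D X) Y) → D = 0) :
    Set.BijOn
      (fun M : Module.End K V => (M, (2:K)⁻¹ • M, (2:K)⁻¹ • M))
      {M : Module.End K V | ∀ X Y : V, M (μ X Y) = μ (M X) Y}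
      {a : Module.End K V × Module.End K V × Module.End K V |
        (∀ X Y : V, a.1 (μ X Y) = μ (a.2.1 X) Y + μ X (a.2.2 Y)) ∧
        a.1 - (2:K)⁻¹ • a.2.1 - (3 * (2:K)⁻¹) • a.2.2 = 0} := by
  have two_ne : (2:K) ≠ 0 := two_ne_zero
  have hCtoQC : ∀ M : Module.End K V, (∀ X Y : V, M (μ X Y) = μ (M X) Y) →
      ∀ X Y : V, μ (M X) Y = μ X (M Y) := fun M h => (Set.ext_iff.mp hQC M).mpr h
  have hQCtoC : ∀ M : Module.End K V, (∀ X Y : V, μ (M X) Y = μ X (M Y)) →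
      ∀ X Y : V, M (μ X Y) = μ (M X) Y := fun M h => (Set.ext_iff.mp hQC M).mp h
  refine ⟨?_, ?_, ?_⟩
  · -- MapsTo
    intro M hM
    have hq := hCtoQC M hM
    refine ⟨?_, ?_⟩
    · intro X Y
      show M (μ X Y) = μ ((2:K)⁻¹ • M X) Y + μ X ((2:K)⁻¹ • M Y)
      simp only [map_smul, LinearMap.smul_apply]
      linear_combination (norm := module) hM X Y + (2:K)⁻¹ • hq X Y
    · show M - (2:K)⁻¹ • ((2:K)⁻¹ • M) - (3 * (2:K)⁻¹) • ((2:K)⁻¹ • M) = 0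
      module
  · -- InjOn
    intro M1 _ M2 _ h
    exact congrArg Prod.fst h
  · -- SurjOn
    rintro ⟨A, B, C⟩ ⟨h1, h2⟩
    simp only [Set.mem_setOf_eq] at h1 h2
    -- the "mirror" identity from anticommutativity
    have h1' : ∀ X Y : V, A (μ X Y) = μ (C X) Y + μ X (B Y) := by
      intro X Y
      rw [hanti X Y, map_neg, h1 Y X, hanti (B Y) X, hanti Y (C X)]
      abel
    -- B - C is in QC, hence in C
    have hEQC : ∀ X Y : V, μ ((B - C) X) Y = μ X ((B - C) Y) := by
      intro X Y
      have h := (h1 X Y).symm.trans (h1' X Y)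
      simp only [LinearMap.sub_apply, map_sub, LinearMap.sub_apply]
      linear_combination (norm := module) h
    have hEC : ∀ X Y : V, (B - C) (μ X Y) = μ ((B - C) X) Y := hQCtoC _ hEQC
    -- (B+C)/2 is a quasiderivation with companion A
    have hQ : ∀ X Y : V, A (μ X Y) =
        μ (((2:K)⁻¹ • (B + C)) X) Y + μ X (((2:K)⁻¹ • (B + C)) Y) := by
      intro X Y
      simp only [LinearMap.smul_apply, LinearMap.add_apply, map_smul, map_add,
        LinearMap.smul_apply, LinearMap.add_apply]
      linear_combination (norm := module) (2:K)⁻¹ • h1 X Y + (2:K)⁻¹ • h1' X Y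
    have hQmem : ((2:K)⁻¹ • (B + C)) ∈ {Q : Module.End K V |
        ∃ P : Module.End K V, ∀ X Y : V, P (μ X Y) = μ (Q X) Y + μ X (Q Y)} := ⟨A, hQ⟩
    rw [hQDer] at hQmem
    obtain ⟨D, hD, M, hMC, hQDM⟩ := hQmem
    have hMQC : ∀ X Y : V, μ (M X) Y = μ X (M Y) := hCtoQC M hMC
    -- A μ(X,Y) = D μ(X,Y) + 2 μ(M X, Y)
    have hA1 : ∀ X Y : V, A (μ X Y) = D (μ X Y) + (2:K) • μ (M X) Y := by
      intro X Y
      have hq := hQ X Y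
      rw [show ((2:K)⁻¹ • (B + C)) = D + M from hQDM] at hq
      simp only [LinearMap.add_apply, map_add, LinearMap.add_apply] at hq
      linear_combination (norm := module) hq - hD X Y - hMQC X Y
    -- key pointwise identity: D = (1/2)(B-C) on brackets
    have key : ∀ X Y : V, D (μ X Y) = ((2:K)⁻¹ • (B - C)) (μ X Y) := by
      intro X Y
      have e2 := congrArg (fun f : Module.End K V => f (μ X Y)) h2
      have e3 := congrArg (fun f : Module.End K V => f (μ X Y)) hQDM
      simp only [LinearMap.sub_apply, LinearMap.smul_apply, LinearMap.add_apply,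
        LinearMap.zero_apply] at e2 e3 ⊢
      linear_combination (norm := module)
        hA1 X Y - e2 - (2:K) • e3 - (2:K) • hMC X Y
    -- hence D = (1/2)(B-C) everywhere, by perfectness
    have hDE : D = (2:K)⁻¹ • (B - C) := by
      apply LinearMap.ext
      intro v
      have hv : v ∈ Submodule.span K {z : V | ∃ X Y : V, μ X Y = z} := by
        rw [hperf]; trivial
      induction hv using Submodule.span_induction with
      | mem z hz => obtain ⟨X, Y, rfl⟩ := hz; exact key X Y
      | zero => simp
      | add x y _ _ hx hy => simp only [map_add, hx, hy]
      | smul c x _ hx => simp only [map_smul, hx]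
    -- D is a derivation in the centroid, so D = 0
    have hDC : ∀ X Y : V, D (μ X Y) = μ (D X) Y := by
      intro X Y
      rw [hDE]
      simp only [LinearMap.smul_apply, map_smul, LinearMap.smul_apply]
      rw [hEC X Y]
    have hD0 : D = 0 := hint D hD hDC
    -- so B = C
    have hBC : B = C := by
      have h0 : (2:K)⁻¹ • (B - C) = 0 := hD0 ▸ hDE.symm
      rcases smul_eq_zero.mp h0 with h | h
      · exact absurd h (by norm_num)
      · exact sub_eq_zero.mp h
    -- and B = M
    have hBM : B = M := by
      have hqm : (2:K)⁻¹ • (B + C) = M := by rw [hQDM, hD0, zero_add]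
      rw [← hBC] at hqm
      rw [← hqm, ← two_smul K B, smul_smul, inv_mul_cancel₀ two_ne, one_smul]
    have hBinC : ∀ X Y : V, B (μ X Y) = μ (B X) Y := by
      intro X Y; rw [hBM]; exact hMC X Y
    -- A = 2 B
    have hA2B : A = (2:K) • B := by
      rw [← hBC] at h2
      have h2' : A = (2:K)⁻¹ • B + (3 * (2:K)⁻¹) • B := by
        rw [sub_sub, sub_eq_zero] at h2; exact h2
      rw [h2']; module
    have hAC : ∀ X Y : V, A (μ X Y) = μ (A X) Y := by
      intro X Y
      rw [hA2B]
      simp only [LinearMap.smul_apply, map_smul, LinearMap.smul_apply]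
      rw [hBinC X Y]
    refine ⟨A, hAC, ?_⟩
    have hB : (2:K)⁻¹ • A = B := by
      rw [hA2B, smul_smul, inv_mul_cancel₀ two_ne, one_smul]
    exact Prod.ext rfl (Prod.ext hB (hBC ▸ hB))
end

section
/- Let A = (V, μ) be a perfect anti-commutative algebra over a field of characteristic zero with QDer(A) = Der(A) ⊕ C(A). Then NDer(A) = {(P,Q) ∈ End(V)² : Pμ(X,Y) = μ(QX,Y) + μ(X,QY)} is linearly isomorphic to Der(A) × C(A), via (D, M) ↦ (D + M, D + ½M). -/
theorem stmt9 {K V : Type*} [Field K] [CharZero K] [AddCommGroup V] [Module K V]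
    (μ : V →ₗ[K] V →ₗ[K] V)
    (hanti : ∀ X Y : V, μ X Y = - μ Y X)
    (hperf : Submodule.span K {z : V | ∃ X Y : V, μ X Y = z} = ⊤)
    (hQDer : {Q : Module.End K V |
        ∃ P : Module.End K V, ∀ X Y : V, P (μ X Y) = μ (Q X) Y + μ X (Q Y)} =
      {Q : Module.End K V |
        ∃ D ∈ {D : Module.End K V | ∀ X Y : V, D (μ X Y) = μ (D X) Y + μ X (D Y)},
        ∃ M ∈ {M : Module.End K V | ∀ X Y : V, M (μ X Y) = μ (M X) Y}, Q = D + M})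
    (hint : ∀ D : Module.End K V,
      (∀ X Y : V, D (μ X Y) = μ (D X) Y + μ X (D Y)) →
      (∀ X Y : V, D (μ X Y) = μ (D X) Y) → D = 0) :
    Set.BijOn
      (fun p : Module.End K V × Module.End K V => (p.1 + p.2, p.1 + (2:K)⁻¹ • p.2))
      ({D : Module.End K V | ∀ X Y : V, D (μ X Y) = μ (D X) Y + μ X (D Y)} ×ˢ
        {M : Module.End K V | ∀ X Y : V, M (μ X Y) = μ (M X) Y})
      {p : Module.End K V × Module.End K V |
        ∀ X Y : V, p.1 (μ X Y) = μ (p.2 X) Y + μ X (p.2 Y)} := by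
  -- centroid elements also satisfy M μ X Y = μ X (M Y)
  have hcent : ∀ M : Module.End K V, (∀ X Y : V, M (μ X Y) = μ (M X) Y) →
      ∀ X Y : V, M (μ X Y) = μ X (M Y) := by
    intro M hM X Y
    have := hM Y X
    rw [hanti Y X, map_neg, hanti (M Y) X] at this
    exact neg_injective this
  have htwo : (2:K) ≠ 0 := two_ne_zero
  -- equality of endomorphisms from agreement on products
  have heq : ∀ P R : Module.End K V, (∀ X Y : V, P (μ X Y) = R (μ X Y)) → P = R := by
    intro P R h
    ext v
    have hv : v ∈ Submodule.span K {z : V | ∃ X Y : V, μ X Y = z} := by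
      rw [hperf]; trivial
    induction hv using Submodule.span_induction with
    | mem z hz => obtain ⟨X, Y, rfl⟩ := hz; exact h X Y
    | zero => simp
    | add x y _ _ hx hy => simp [hx, hy]
    | smul c x _ hx => simp [hx]
  constructor
  · rintro ⟨D, M⟩ ⟨hD, hM⟩ X Y
    simp only [Set.mem_setOf_eq] at hD hM ⊢
    have h1 := hcent M hM X Y
    have h2 := hM X Y
    simp only [LinearMap.add_apply, LinearMap.smul_apply, map_add, map_smul]
    rw [hD X Y, ← h2, ← h1]
    module
  constructor
  · rintro ⟨D, M⟩ _ ⟨D', M'⟩ _ h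
    simp only [Prod.mk.injEq] at h
    obtain ⟨h1, h2⟩ := h
    have hDD : D = D' := by
      have key : (2:K) • (D + (2:K)⁻¹ • M) - (D + M)
          = (2:K) • (D' + (2:K)⁻¹ • M') - (D' + M') := by rw [h1, h2]
      calc D = (2:K) • (D + (2:K)⁻¹ • M) - (D + M) := by module
        _ = (2:K) • (D' + (2:K)⁻¹ • M') - (D' + M') := key
        _ = D' := by module
    subst hDD
    have hMM : M = M' := by
      have := h1
      simpa [add_right_inj] using this
    simp [hMM]
  · rintro ⟨P, Q⟩ hPQ
    simp only [Set.mem_setOf_eq] at hPQ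
    have hQmem : Q ∈ {Q : Module.End K V |
        ∃ P : Module.End K V, ∀ X Y : V, P (μ X Y) = μ (Q X) Y + μ X (Q Y)} := ⟨P, hPQ⟩
    rw [hQDer] at hQmem
    obtain ⟨D, hD, M, hM, rfl⟩ := hQmem
    refine ⟨(D, (2:K) • M), ⟨hD, ?_⟩, ?_⟩
    · intro X Y
      simp [hM X Y]
    · have hP : P = D + (2:K) • M := by
        apply heq
        intro X Y
        rw [hPQ X Y]
        simp only [LinearMap.add_apply, LinearMap.smul_apply, map_add, map_smul]
        rw [hD X Y, ← hM X Y, ← hcent M hM X Y, two_smul]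
        abel
      simp only [Prod.mk.injEq]
      constructor
      · rw [hP]
      · rw [smul_smul]
        norm_num
end

section
/- Let A = (V, μ) be a perfect anti-commutative algebra over a field of characteristic zero such that QC(A) = C(A). Then P(A) = {(A,B) ∈ End(V)² : Aμ(X,Y) = μ(BX,Y) for all X,Y} is linearly isomorphic to C(A), via B ↦ (B, B); in particular every pair (A,B) ∈ P(A) satisfies A = B ∈ C(A). -/
theorem stmt10 {K V : Type*} [Field K] [CharZero K] [AddCommGroup V] [Module K V]
    (μ : V →ₗ[K] V →ₗ[K] V)
    (hanti : ∀ X Y : V, μ X Y = - μ Y X)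
    (hperf : Submodule.span K {z : V | ∃ X Y : V, μ X Y = z} = ⊤)
    (hQC : {R : Module.End K V | ∀ X Y : V, μ (R X) Y = μ X (R Y)} =
      {M : Module.End K V | ∀ X Y : V, M (μ X Y) = μ (M X) Y}) :
    Set.BijOn (fun B : Module.End K V => (B, B))
      {M : Module.End K V | ∀ X Y : V, M (μ X Y) = μ (M X) Y}
      {p : Module.End K V × Module.End K V | ∀ X Y : V, p.1 (μ X Y) = μ (p.2 X) Y} ∧
    ∀ p ∈ {p : Module.End K V × Module.End K V | ∀ X Y : V, p.1 (μ X Y) = μ (p.2 X) Y},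
      p.1 = p.2 ∧ p.2 ∈ {M : Module.End K V | ∀ X Y : V, M (μ X Y) = μ (M X) Y} := by
  have key : ∀ p ∈ {p : Module.End K V × Module.End K V |
      ∀ X Y : V, p.1 (μ X Y) = μ (p.2 X) Y},
      p.1 = p.2 ∧ p.2 ∈ {M : Module.End K V | ∀ X Y : V, M (μ X Y) = μ (M X) Y} := by
    rintro ⟨A, B⟩ hp
    simp only [Set.mem_setOf_eq] at hp ⊢
    have hBQC : B ∈ {R : Module.End K V | ∀ X Y : V, μ (R X) Y = μ X (R Y)} := by
      intro X Y
      calc μ (B X) Y = A (μ X Y) := (hp X Y).symm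
        _ = A (-(μ Y X)) := by rw [← hanti X Y]
        _ = -(A (μ Y X)) := by simp
        _ = -(μ (B Y) X) := by rw [hp Y X]
        _ = μ X (B Y) := (hanti X (B Y)).symm
    have hBC : ∀ X Y : V, B (μ X Y) = μ (B X) Y := by
      have := hQC ▸ hBQC; exact this
    have hAB : A = B := by
      ext v
      have hv : v ∈ Submodule.span K {z : V | ∃ X Y : V, μ X Y = z} := by
        rw [hperf]; trivial
      induction hv using Submodule.span_induction with
      | mem z hz => obtain ⟨X, Y, rfl⟩ := hz; rw [hp X Y, hBC X Y]
      | zero => simp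
      | add x y _ _ hx hy => simp [hx, hy]
      | smul c x _ hx => simp [hx]
    exact ⟨hAB, hBC⟩
  refine ⟨⟨fun B hB X Y => ?_, fun B₁ _ B₂ _ h => ?_, fun p hp => ?_⟩, key⟩
  · exact hB X Y
  · exact congrArg Prod.fst h
  · obtain ⟨h1, h2⟩ := key p hp
    refine ⟨p.2, h2, ?_⟩
    obtain ⟨A, B⟩ := p
    simp only at h1 ⊢
    rw [h1]
end

section
/- Let A = (V, μ) be an anti-commutative algebra over K with char K = 0, and let t, u ∈ K with t ≠ 2u. Then the linear map φ₈ : D(t,1,1)(A) × D(u,1,0)(A) → NDer(A) given by φ₈(D,M) = (tD + uM, D + ½M) is well defined and injective. -/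
theorem stmt17 {K V : Type*} [Field K] [CharZero K] [AddCommGroup V] [Module K V]
    (μ : V →ₗ[K] V →ₗ[K] V)
    (hanti : ∀ X Y : V, μ X Y = - μ Y X)
    (t u : K) (htu : t ≠ 2 * u) :
    Set.MapsTo
      (fun p : Module.End K V × Module.End K V =>
        (t • p.1 + u • p.2, p.1 + (2:K)⁻¹ • p.2))
      ({D : Module.End K V | ∀ X Y : V, t • D (μ X Y) = μ (D X) Y + μ X (D Y)} ×ˢ
        {M : Module.End K V | ∀ X Y : V, u • M (μ X Y) = μ (M X) Y})
      {p : Module.End K V × Module.End K V |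
        ∀ X Y : V, p.1 (μ X Y) = μ (p.2 X) Y + μ X (p.2 Y)} ∧
    Set.InjOn
      (fun p : Module.End K V × Module.End K V =>
        (t • p.1 + u • p.2, p.1 + (2:K)⁻¹ • p.2))
      ({D : Module.End K V | ∀ X Y : V, t • D (μ X Y) = μ (D X) Y + μ X (D Y)} ×ˢ
        {M : Module.End K V | ∀ X Y : V, u • M (μ X Y) = μ (M X) Y}) := by
  constructor
  · rintro ⟨D, M⟩ ⟨hD, hM⟩ X Y
    simp only [Set.mem_setOf_eq] at hD hM ⊢
    have hswap : μ (M X) Y = μ X (M Y) := by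
      rw [hanti X (M Y), ← hM Y X, hanti Y X, map_neg, smul_neg, neg_neg, hM]
    simp only [LinearMap.add_apply, LinearMap.smul_apply, map_add, map_smul,
      LinearMap.add_apply, LinearMap.smul_apply]
    rw [hD X Y, hM X Y, hswap]
    have h2 : (2:K) ≠ 0 := two_ne_zero
    rw [← hswap]
    module
  · rintro ⟨D, M⟩ ⟨hD, hM⟩ ⟨D', M'⟩ ⟨hD', hM'⟩ h
    simp only [Prod.mk.injEq] at h
    obtain ⟨h1, h2⟩ := h
    have hD : (t - 2*u) • D = (t - 2*u) • D' := by
      have e : (t - 2*u) • D = (t • D + u • M) - (2*u) • (D + (2:K)⁻¹ • M) := by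
        have h2 : (2:K) ≠ 0 := two_ne_zero
        rw [smul_add, smul_smul]
        field_simp
        module
      have e' : (t - 2*u) • D' = (t • D' + u • M') - (2*u) • (D' + (2:K)⁻¹ • M') := by
        have h2 : (2:K) ≠ 0 := two_ne_zero
        rw [smul_add, smul_smul]
        field_simp
        module
      rw [e, e', h1, h2]
    have hne : t - 2*u ≠ 0 := sub_ne_zero.mpr htu
    have hDD : D = D' := by
      have := smul_right_injective (Module.End K V) hne hD
      exact this
    have hMM : M = M' := by
      rw [hDD] at h2
      have h2' : (2:K)⁻¹ • M = (2:K)⁻¹ • M' := by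
        exact add_left_cancel h2
      exact smul_right_injective (Module.End K V) (inv_ne_zero two_ne_zero) h2'
    exact Prod.ext hDD hMM
end

section
/- Let A = (V, μ) be an anti-commutative algebra over K of characteristic zero, and let t ∈ K. The map φ₆(A,B,C) = (A, ½(B+C)) is a well-defined linear map from T(t)(A) into NDer(A), and φ₅(A,B) = (A, ½B) is a well-defined injective linear map from P(A) into NDer(A). -/
theorem stmt19 {K V : Type*} [Field K] [CharZero K] [AddCommGroup V] [Module K V]
    (μ : V →ₗ[K] V →ₗ[K] V)
    (hanti : ∀ X Y : V, μ X Y = - μ Y X)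
    (t : K) :
    Set.MapsTo
      (fun a : Module.End K V × Module.End K V × Module.End K V =>
        (a.1, (2:K)⁻¹ • (a.2.1 + a.2.2)))
      {a : Module.End K V × Module.End K V × Module.End K V |
        (∀ X Y : V, a.1 (μ X Y) = μ (a.2.1 X) Y + μ X (a.2.2 Y)) ∧
        a.1 + t • a.2.1 + (t - 1) • a.2.2 = 0}
      {p : Module.End K V × Module.End K V |
        ∀ X Y : V, p.1 (μ X Y) = μ (p.2 X) Y + μ X (p.2 Y)} ∧
    Set.MapsTo
      (fun p : Module.End K V × Module.End K V => (p.1, (2:K)⁻¹ • p.2))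
      {p : Module.End K V × Module.End K V | ∀ X Y : V, p.1 (μ X Y) = μ (p.2 X) Y}
      {p : Module.End K V × Module.End K V |
        ∀ X Y : V, p.1 (μ X Y) = μ (p.2 X) Y + μ X (p.2 Y)} ∧
    Set.InjOn
      (fun p : Module.End K V × Module.End K V => (p.1, (2:K)⁻¹ • p.2))
      {p : Module.End K V × Module.End K V | ∀ X Y : V, p.1 (μ X Y) = μ (p.2 X) Y} := by
  have half2 : ∀ v : V, (2:K)⁻¹ • (v + v) = v := by
    intro v
    rw [← two_smul K v, smul_smul, inv_mul_cancel₀ (two_ne_zero), one_smul]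
  refine ⟨?_, ?_, ?_⟩
  · rintro ⟨A, B, C⟩ ⟨h1, -⟩ X Y
    have h3 : A (μ X Y) = μ (C X) Y + μ X (B Y) := by
      have h := h1 Y X
      rw [hanti X Y, map_neg, h, hanti (B Y) X, hanti Y (C X)]
      abel
    show A (μ X Y) = μ (((2:K)⁻¹ • (B + C)) X) Y + μ X (((2:K)⁻¹ • (B + C)) Y)
    have key : A (μ X Y)
        = (2:K)⁻¹ • ((μ (B X) Y + μ X (C Y)) + (μ (C X) Y + μ X (B Y))) := by
      rw [← h1 X Y, ← h3, half2]
    rw [key]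
    simp only [LinearMap.smul_apply, LinearMap.add_apply, map_add, map_smul,
      smul_add, LinearMap.map_smul₂, LinearMap.add_apply]
    abel
  · rintro ⟨A, B⟩ h1 X Y
    simp only [Set.mem_setOf_eq] at h1
    have h3 : A (μ X Y) = μ X (B Y) := by
      rw [hanti X Y, map_neg, h1 Y X, hanti (B Y) X, neg_neg]
    show A (μ X Y) = μ (((2:K)⁻¹ • B) X) Y + μ X (((2:K)⁻¹ • B) Y)
    have key : A (μ X Y) = (2:K)⁻¹ • (μ (B X) Y + μ X (B Y)) := by
      rw [← h1 X Y, ← h3, half2]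
    rw [key]
    simp only [LinearMap.smul_apply, map_smul, smul_add, LinearMap.map_smul₂]
  · rintro ⟨A, B⟩ - ⟨A', B'⟩ - h
    simp only [Prod.mk.injEq] at h
    obtain ⟨hA, hB⟩ := h
    have : B = B' := smul_right_injective (Module.End K V)
      (inv_ne_zero (two_ne_zero : (2:K) ≠ 0)) hB
    simp [hA, this]
end
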